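/- Let f be the Collatz map, H a complex Hilbert space with orthonormal basis {e_n}_{n≥1}, and T1, T2 the bounded operators with T1 e_n = e_{3n+1} for n odd, T1 e_n = 0 for n even, T2 e_n = e_{n/2} for n even, T2 e_n = 0 for n odd. If the Collatz conjecture holds, then C*(T1,T2) has no non-trivial reducing subspaces. -/

import Mathlib

/-- The Collatz map on positive integers: `3n+1` for odd `n`, `n/2` for even `n`. -/
def collatz (n : ℕ+) : ℕ+ :=
  if h : (n : ℕ) % 2 = 1 then 3 * n + 1
  else ⟨(n : ℕ) / 2, by
    have h2 : 0 < n.1 := n.2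
    have h3 : ¬ n.1 % 2 = 1 := h
    show 0 < n.1 / 2
    omega⟩

/-- The forward orbit of `x` under `f`. -/
def orbit {X : Type*} (f : X → X) (x : X) : Set X := Set.range fun k => f^[k] x

/-- The orbit equivalence relation induced by `f`: `x ~ y` iff the orbits meet. -/
def orbEquiv {X : Type*} (f : X → X) (x y : X) : Prop :=
  (orbit f x ∩ orbit f y).Nonempty

/-- The C*-algebra of operators generated by a set `S` of bounded operators on a complex
Hilbert space: the closure of the (non-unital) star subalgebra generated by `S`. -/
noncomputable def CstarGen {H : Type*} [NormedAddCommGroup H] [InnerProductSpace ℂ H]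
    [CompleteSpace H] (S : Set (H →L[ℂ] H)) : Set (H →L[ℂ] H) :=
  closure (NonUnitalStarAlgebra.adjoin ℂ S : Set (H →L[ℂ] H))

/-!
If `M ≠ 0` is reducing, some `x ∈ M` has `⟪e_n, x⟫ ≠ 0`. Each Collatz step is undone by an adjoint,
`T₁* e_{3n+1} = e_n` and `T₂* e_{n/2} = e_n`, so applying `T₁` or `T₂` along the orbit of `n` moves
this nonzero coefficient to `e_1`. The partial isometries `T₁`, `T₂` make `D = T₂ T₂ T₁` a
contraction; it sends `e_n` to `e_{(3n+1)/4}` if `n ≡ 1 mod 4` and to `0` otherwise. As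
`(3n+1)/4 < n` for `n > 1` and `D e_1 = e_1`, the powers `D^k` converge strongly to the projection
onto `ℂ e_1`, whence `e_1 ∈ M`. Running the orbits backwards with `T₁*`, `T₂*` puts every `e_m`
in `M`, so `M = H`.
-/

open ContinuousLinearMap Filter Topology InnerProductSpace

theorem ContinuousLinearMap.norm_pow_le_one {𝕜 E : Type*} [NontriviallyNormedField 𝕜]
    [SeminormedAddCommGroup E] [NormedSpace 𝕜 E] {D : E →L[𝕜] E} (hD : ‖D‖ ≤ 1) (k : ℕ) :
    ‖D ^ k‖ ≤ 1 := by
  induction k with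
  | zero => exact norm_id_le
  | succ k ih => exact (pow_succ D k ▸ norm_mul_le _ _).trans (mul_le_one₀ ih (norm_nonneg _) hD)

namespace HilbertBasis

variable {ι 𝕜 E F : Type*} [RCLike 𝕜] [NormedAddCommGroup E] [InnerProductSpace 𝕜 E]
  [NormedAddCommGroup F] [NormedSpace 𝕜 F] (b : HilbertBasis ι 𝕜 E)

theorem ext_inner {v w : E} (h : ∀ i, ⟪b i, v⟫_𝕜 = ⟪b i, w⟫_𝕜) : v = w :=
  b.repr.injective <| lp.ext <| funext fun i => by simp only [b.repr_apply_apply, h]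

theorem ext_continuousLinearMap {S T : E →L[𝕜] F} (h : ∀ i, S (b i) = T (b i)) : S = T :=
  ext_on (Submodule.dense_iff_topologicalClosure_eq_top.2 b.dense_span) (Set.forall_mem_range.2 h)

theorem submodule_eq_top_of_forall_mem {M : Submodule 𝕜 E} (hM : IsClosed (M : Set E))
    (h : ∀ i, b i ∈ M) : M = ⊤ :=
  top_unique <| b.dense_span.ge.trans <| Submodule.topologicalClosure_minimal _
    (Submodule.span_le.2 (Set.range_subset_iff.2 h)) hM

theorem tendsto_apply_of_tendsto_apply_basis {α : Type*} {l : Filter α} {A : α → E →L[𝕜] F}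
    {C : ℝ} (hA : ∀ a, ‖A a‖ ≤ C) {B : E →L[𝕜] F}
    (h : ∀ i, Tendsto (fun a ↦ A a (b i)) l (𝓝 (B (b i)))) (x : E) :
    Tendsto (fun a ↦ A a x) l (𝓝 (B x)) := by
  let N : Submodule 𝕜 E :=
    { carrier := {x | Tendsto (fun a ↦ A a x) l (𝓝 (B x))}
      add_mem' := fun hx hy ↦ by simpa only [Set.mem_ofPred_eq, map_add] using hx.add hy
      zero_mem' := by simpa only [Set.mem_ofPred_eq, map_zero] using tendsto_const_nhds
      smul_mem' := fun c _ hx ↦ by simpa only [Set.mem_ofPred_eq, map_smul] using hx.const_smul c }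
  have hN : IsClosed (N : Set E) :=
    (LipschitzWith.uniformEquicontinuous _ C.toNNReal fun a ↦ (A a).lipschitz.weaken <| by
      rw [← NNReal.coe_le_coe, coe_nnnorm]
      exact (hA a).trans (Real.le_coe_toNNReal C)).equicontinuous
      |>.isClosed_setOfPred_tendsto B.continuous
  exact (b.submodule_eq_top_of_forall_mem hN h).ge (Submodule.mem_top (x := x))

section PartialShift

variable [CompleteSpace E] {p : ι → Prop} [DecidablePred p] {σ : ι → ι} {T : E →L[𝕜] E}

theorem adjoint_apply_of_apply_eq_ite (hT : ∀ i, T (b i) = if p i then b (σ i) else 0)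
    (hσ : Set.InjOn σ {i | p i}) {i : ι} (hi : p i) : adjoint T (b (σ i)) = b i := by
  classical
  refine b.ext_inner fun j ↦ ?_
  rw [adjoint_inner_right, hT j]
  have hb := orthonormal_iff_ite.1 b.orthonormal
  split_ifs with hj
  · simp only [hb, hσ.eq_iff hj hi]
  · rw [inner_zero_left, hb, if_neg (by rintro rfl; exact hj hi)]

theorem norm_le_one_of_apply_eq_ite (hT : ∀ i, T (b i) = if p i then b (σ i) else 0)
    (hσ : Set.InjOn σ {i | p i}) : ‖T‖ ≤ 1 := by
  have hE : ∀ i, (star T * T) (b i) = if p i then b i else 0 := fun i ↦ by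
    rw [star_eq_adjoint, mul_apply_eq_comp, hT i]
    split_ifs with hi
    · exact b.adjoint_apply_of_apply_eq_ite hT hσ hi
    · exact map_zero _
  have hproj : IsStarProjection (star T * T) :=
    { isIdempotentElem := b.ext_continuousLinearMap fun i ↦ by
        rw [mul_apply_eq_comp, hE i]
        split_ifs with hi
        · rw [hE i, if_pos hi]
        · exact map_zero _
      isSelfAdjoint := IsSelfAdjoint.star_mul_self T }
  have h : ‖adjoint T ∘L T‖ ≤ 1 := hproj.norm_le
  rw [norm_adjoint_comp_self] at h
  nlinarith [norm_nonneg T]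

end PartialShift

end HilbertBasis

namespace Submodule

variable {ι 𝕜 E : Type*} [RCLike 𝕜] [NormedAddCommGroup E] [InnerProductSpace 𝕜 E]
  [CompleteSpace E]

def IsReducing (M : Submodule 𝕜 E) (S : Set (E →L[𝕜] E)) : Prop :=
  ∀ A ∈ S, ∀ x ∈ M, A x ∈ M ∧ adjoint A x ∈ M

variable {M : Submodule 𝕜 E} {S : Set (E →L[𝕜] E)}

theorem IsReducing.mono {S' : Set (E →L[𝕜] E)} (hM : M.IsReducing S') (hS : S ⊆ S') :
    M.IsReducing S :=
  fun A hA ↦ hM A (hS hA)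

variable (b : HilbertBasis ι 𝕜 E) {f : ι → ι} (hf : ∀ i, ∃ A ∈ S, adjoint A (b (f i)) = b i)
include hf

theorem IsReducing.exists_inner_iterate_ne_zero (hM : M.IsReducing S) {x : E} (hx : x ∈ M)
    {i : ι} (hi : ⟪b i, x⟫_𝕜 ≠ 0) (k : ℕ) : ∃ y ∈ M, ⟪b (f^[k] i), y⟫_𝕜 ≠ 0 := by
  induction k generalizing i x with
  | zero => exact ⟨x, hx, hi⟩
  | succ k ih =>
    obtain ⟨A, hA, hAi⟩ := hf i
    refine ih (hM A hA x hx).1 ?_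
    rwa [← adjoint_inner_left, hAi]

theorem IsReducing.basis_mem_of_iterate_mem (hM : M.IsReducing S) {i : ι} {k : ℕ}
    (h : b (f^[k] i) ∈ M) : b i ∈ M := by
  induction k generalizing i with
  | zero => exact h
  | succ k ih =>
    obtain ⟨A, hA, hAi⟩ := hf i
    exact hAi ▸ (hM A hA _ (ih h)).2

end Submodule

section Collatz

variable {n : ℕ+}

theorem collatz_of_odd (h : (n : ℕ) % 2 = 1) : collatz n = 3 * n + 1 :=
  dif_pos h

theorem coe_collatz_of_even (h : (n : ℕ) % 2 = 0) : (collatz n : ℕ) = n / 2 :=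
  congrArg PNat.val (dif_neg (by omega))

theorem coe_collatz_iterate_three (h : (n : ℕ) % 4 = 1) :
    (collatz^[3] n : ℕ) = (3 * n + 1) / 4 := by
  have h3 : ((3 * n + 1 : ℕ+) : ℕ) = 3 * n + 1 := by simp
  have h2 : (collatz (3 * n + 1) : ℕ) = (3 * n + 1) / 2 := by
    rw [coe_collatz_of_even (by omega), h3]
  simp only [Function.iterate_succ_apply, Function.iterate_zero_apply,
    collatz_of_odd (show (n : ℕ) % 2 = 1 by omega)]
  rw [coe_collatz_of_even (by omega), h2]
  omega

theorem three_mul_add_one_injective : Function.Injective fun n : ℕ+ ↦ 3 * n + 1 := by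
  intro m n h
  simpa using h

theorem collatz_injOn_even : Set.InjOn collatz {n | (n : ℕ) % 2 = 0} := by
  intro m (hm : (m : ℕ) % 2 = 0) n (hn : (n : ℕ) % 2 = 0) h
  have := congrArg PNat.val h
  rw [coe_collatz_of_even hm, coe_collatz_of_even hn] at this
  exact PNat.eq (by omega)

end Collatz

section CollatzOperators

variable {H : Type*} [NormedAddCommGroup H] [InnerProductSpace ℂ H]
  (b : HilbertBasis ℕ+ ℂ H) {T1 T2 : H →L[ℂ] H}
  (hT1 : ∀ n : ℕ+, T1 (b n) = if (n : ℕ) % 2 = 1 then b (3 * n + 1) else 0)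
  (hT2 : ∀ n : ℕ+, T2 (b n) = if (n : ℕ) % 2 = 0 then b (collatz n) else 0)
include hT1 hT2

theorem mul_mul_apply_basis (n : ℕ+) :
    (T2 * T2 * T1) (b n) = if (n : ℕ) % 4 = 1 then b (collatz^[3] n) else 0 := by
  simp only [mul_apply_eq_comp, hT1]
  rcases Nat.mod_two_eq_zero_or_one n with h | h
  · rw [if_neg (by omega), if_neg (by omega), map_zero, map_zero]
  · have h3 : ((3 * n + 1 : ℕ+) : ℕ) = 3 * n + 1 := by simp
    have h2 : (collatz (3 * n + 1) : ℕ) = (3 * n + 1) / 2 := by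
      rw [coe_collatz_of_even (by omega), h3]
    rw [if_pos h, hT2, if_pos (by omega), hT2]
    simp only [Function.iterate_succ_apply, Function.iterate_zero_apply, collatz_of_odd h, h2]
    split_ifs <;> first | rfl | omega

theorem tendsto_pow_apply_basis_of_ne_one {n : ℕ+} (hn : n ≠ 1) :
    Tendsto (fun k ↦ ((T2 * T2 * T1) ^ k) (b n)) atTop (𝓝 0) := by
  refine (tendsto_add_atTop_iff_nat 1).1 ?_
  simp only [pow_succ, mul_apply_eq_comp, mul_mul_apply_basis b hT1 hT2]
  split_ifs with h
  · have hcoe := coe_collatz_iterate_three h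
    have hn' : (n : ℕ) ≠ 1 := fun h' ↦ hn (PNat.eq h')
    have hne : collatz^[3] n ≠ 1 := fun h' ↦ by
      rw [h', PNat.one_coe] at hcoe
      omega
    have hlt : collatz^[3] n < n := by
      rw [← PNat.coe_lt_coe, hcoe]
      omega
    exact tendsto_pow_apply_basis_of_ne_one hne
  · simpa only [map_zero] using tendsto_const_nhds
termination_by n
decreasing_by exact hlt

theorem mul_mul_apply_basis_one : (T2 * T2 * T1) (b 1) = b 1 := by
  rw [mul_mul_apply_basis b hT1 hT2, if_pos (show ((1 : ℕ+) : ℕ) % 4 = 1 from rfl)]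
  rfl

theorem tendsto_pow_apply_basis (n : ℕ+) :
    Tendsto (fun k ↦ ((T2 * T2 * T1) ^ k) (b n)) atTop (𝓝 (rankOne ℂ (b 1) (b 1) (b n))) := by
  rw [rankOne_apply, orthonormal_iff_ite.1 b.orthonormal]
  split_ifs with hn
  · subst hn
    simp only [one_smul, FunLike.coe_pow_eq_iterate,
      Function.iterate_fixed (mul_mul_apply_basis_one b hT1 hT2)]
    exact tendsto_const_nhds
  · simpa only [zero_smul] using tendsto_pow_apply_basis_of_ne_one b hT1 hT2 (Ne.symm hn)

variable [CompleteSpace H]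

theorem exists_adjoint_apply_collatz (n : ℕ+) :
    ∃ A ∈ ({T1, T2} : Set (H →L[ℂ] H)), adjoint A (b (collatz n)) = b n := by
  rcases Nat.mod_two_eq_zero_or_one n with h | h
  · exact ⟨T2, by simp, b.adjoint_apply_of_apply_eq_ite hT2 collatz_injOn_even h⟩
  · refine ⟨T1, by simp, ?_⟩
    rw [collatz_of_odd h]
    exact b.adjoint_apply_of_apply_eq_ite hT1 three_mul_add_one_injective.injOn h

theorem basis_one_mem_of_inner_ne_zero {M : Submodule ℂ H} (hMc : IsClosed (M : Set H))
    (hM : M.IsReducing {T1, T2}) {y : H} (hy : y ∈ M) (hy1 : ⟪b 1, y⟫_ℂ ≠ 0) : b 1 ∈ M := by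
  have hDM : ∀ x ∈ M, (T2 * T2 * T1) x ∈ M := fun x hx ↦
    (hM T2 (by simp) _ (hM T2 (by simp) _ (hM T1 (by simp) x hx).1).1).1
  have hDk : ∀ k, ((T2 * T2 * T1) ^ k) y ∈ M := fun k ↦ by
    induction k with
    | zero => exact hy
    | succ k ih => rw [pow_succ', mul_apply_eq_comp]; exact hDM _ ih
  have hT1_norm := b.norm_le_one_of_apply_eq_ite hT1 three_mul_add_one_injective.injOn
  have hT2_norm := b.norm_le_one_of_apply_eq_ite hT2 collatz_injOn_even
  have hD : ‖T2 * T2 * T1‖ ≤ 1 := norm_mul₃_le.trans <|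
    mul_le_one₀ (mul_le_one₀ hT2_norm (norm_nonneg _) hT2_norm) (norm_nonneg _) hT1_norm
  have hlim := b.tendsto_apply_of_tendsto_apply_basis (norm_pow_le_one hD)
    (tendsto_pow_apply_basis b hT1 hT2) y
  have h := M.smul_mem (⟪b 1, y⟫_ℂ)⁻¹ (hMc.mem_of_tendsto hlim (Eventually.of_forall hDk))
  rwa [rankOne_apply, smul_smul, inv_mul_cancel₀ hy1, one_smul] at h

end CollatzOperators

/-- If the Collatz conjecture holds, `C*(T₁,T₂)` has no non-trivial reducing subspaces. -/
theorem irreducible_pair_of_collatz {H : Type*} [NormedAddCommGroup H] [InnerProductSpace ℂ H]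
    [CompleteSpace H] (b : HilbertBasis ℕ+ ℂ H)
    (T1 T2 : H →L[ℂ] H)
    (hT1 : ∀ n : ℕ+, T1 (b n) = if (n : ℕ) % 2 = 1 then b (3 * n + 1) else 0)
    (hT2 : ∀ n : ℕ+, T2 (b n) = if (n : ℕ) % 2 = 0 then b (collatz n) else 0)
    (hcollatz : ∀ m : ℕ+, (1 : ℕ+) ∈ orbit collatz m) :
    ∀ M : Submodule ℂ H, IsClosed (M : Set H) →
      (∀ A ∈ CstarGen {T1, T2}, ∀ x ∈ M, A x ∈ M ∧ ContinuousLinearMap.adjoint A x ∈ M) →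
      M = ⊥ ∨ M = ⊤ := by
  intro M hMc hM
  have hM' : M.IsReducing {T1, T2} :=
    Submodule.IsReducing.mono hM fun A hA ↦
      subset_closure (NonUnitalStarAlgebra.subset_adjoin ℂ _ hA)
  have hstep := exists_adjoint_apply_collatz b hT1 hT2
  rcases eq_or_ne M ⊥ with hbot | hbot
  · exact .inl hbot
  obtain ⟨x, hx, hx0⟩ := Submodule.exists_mem_ne_zero_of_ne_bot hbot
  obtain ⟨n, hn⟩ : ∃ n, ⟪b n, x⟫_ℂ ≠ 0 := by
    by_contra! h
    exact hx0 (b.ext_inner fun i ↦ by rw [h i, inner_zero_right])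
  obtain ⟨k, hk : collatz^[k] n = 1⟩ := hcollatz n
  obtain ⟨y, hy, hy1⟩ := hM'.exists_inner_iterate_ne_zero b hstep hx hn k
  have hb1 := basis_one_mem_of_inner_ne_zero b hT1 hT2 hMc hM' hy (hk ▸ hy1)
  refine .inr (b.submodule_eq_top_of_forall_mem hMc fun m ↦ ?_)
  obtain ⟨k, hk : collatz^[k] m = 1⟩ := hcollatz m
  exact hM'.basis_mem_of_iterate_mem b hstep (k := k) (hk ▸ hb1)
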